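/- Fix a nonempty k-local property P = P(F) of [n]^d-arrays over Σ, an [n]^d-array A over Σ, and an (n,d,k,w)-system of grids (G_0,...,G_r), and let W be the family of all maximal (P,A)-witness blocks. Then there exists an [n]^d-array A' over Σ satisfying P such that A'(x) = A(x) for every x ∉ ⋃_{B∈W} Par(B). -/

import Mathlib

open Finset

/-- `I[:ℓ]`: the set of the `ℓ` smallest elements of `I` (or `I` itself if `|I| < ℓ`). -/
def takeSmallest (I : Finset ℕ) (ℓ : ℕ) : Finset ℕ :=
  I.filter fun x => (I.filter fun y => y ≤ x).card ≤ ℓ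

/-- `I[ℓ+1:] = I \ I[:ℓ]`. -/
def dropSmallest (I : Finset ℕ) (ℓ : ℕ) : Finset ℕ :=
  I \ takeSmallest I ℓ

/-- An `(n,w)`-interval partition: a partition of `[n] = {1,…,n}` into consecutive,
pairwise disjoint intervals `I_1, …, I_t`, each of size `w` or `w+1`, where for `j < j'`
every element of `I j` is smaller than every element of `I j'`. -/
structure IntervalPartition (n w : ℕ) where
  t : ℕ
  I : Fin t → Finset ℕ
  interval : ∀ j, ∃ a b, 1 ≤ a ∧ a ≤ b ∧ b ≤ n ∧ I j = Finset.Icc a b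
  size : ∀ j, (I j).card = w ∨ (I j).card = w + 1
  cover : ∀ x ∈ Finset.Icc 1 n, ∃ j, x ∈ I j
  ordered : ∀ j j' : Fin t, j < j' → ∀ x ∈ I j, ∀ y ∈ I j', x < y

/-- The hypergrid `[n]^d`, as a set of tuples. -/
def cube (n d : ℕ) : Set (Fin d → ℕ) :=
  {x | ∀ i, 1 ≤ x i ∧ x i ≤ n}

/-- The `(n,d,k,w)`-grid induced by an `(n,w)`-interval partition. -/
def gridOf (n d k w : ℕ) (P : IntervalPartition n w) : Set (Fin d → ℕ) :=
  {x ∈ cube n d | ∃ i : Fin d, ∃ j : Fin P.t, x i ∈ takeSmallest (P.I j) (k - 1)}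

/-- `G ∈ 𝒢(n,d,k,w)`: `G` is the grid induced by some `(n,w)`-interval partition. -/
def IsGrid (n d k w : ℕ) (G : Set (Fin d → ℕ)) : Prop :=
  ∃ P : IntervalPartition n w, G = gridOf n d k w P

/-- Two entries of `[n]^d` are neighbors if `∑ i, |x i − y i| = 1`. -/
def Neighbor {d : ℕ} (x y : Fin d → ℕ) : Prop :=
  (∑ i, Nat.dist (x i) (y i)) = 1

/-- A `G`-block: a connected component of the neighborhood graph on `[n]^d \ G`. -/
def IsBlock (n d : ℕ) (G B : Set (Fin d → ℕ)) : Prop :=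
  B.Nonempty ∧ B ⊆ cube n d \ G ∧
    (∀ x ∈ B, ∀ y ∈ B,
      Relation.ReflTransGen
        (fun a b => a ∈ cube n d \ G ∧ b ∈ cube n d \ G ∧ Neighbor a b) x y) ∧
    (∀ x ∈ B, ∀ y, y ∈ cube n d \ G → Neighbor x y → y ∈ B)

/-- The closure `B̄` of a block `B`. -/
def blockClosure (n d k : ℕ) (B : Set (Fin d → ℕ)) : Set (Fin d → ℕ) :=
  {x ∈ cube n d | ∃ y ∈ B, ∀ i, Nat.dist (x i) (y i) < k}

/-- The boundary `∂B = B̄ \ B` of a block `B`. -/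
def blockBoundary (n d k : ℕ) (B : Set (Fin d → ℕ)) : Set (Fin d → ℕ) :=
  blockClosure n d k B \ B

/-- A valid location of a width-`k` subarray in `[n]^d`: an element of `[n−k+1]^d`. -/
def ValidLoc (n d k : ℕ) (a : Fin d → ℕ) : Prop :=
  ∀ i, 1 ≤ a i ∧ a i ≤ n - k + 1

/-- The width-`k` box with lowest corner `a`: `{a_1,…,a_1+k−1} × ⋯ × {a_d,…,a_d+k−1}`. -/
def kbox (d k : ℕ) (a : Fin d → ℕ) : Set (Fin d → ℕ) :=
  {x | ∀ i, a i ≤ x i ∧ x i ≤ a i + k - 1}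

/-- Some forbidden pattern of `F` occurs as a consecutive subarray of `A` at location `a`;
patterns are compared on `[k]^d`. -/
def HasCopyAt {σ : Type*} (d k : ℕ) (F : Set ((Fin d → ℕ) → σ))
    (A : (Fin d → ℕ) → σ) (a : Fin d → ℕ) : Prop :=
  ∃ S ∈ F, ∀ j : Fin d → ℕ, (∀ i, 1 ≤ j i ∧ j i ≤ k) →
    A (fun i => a i + j i - 1) = S j

/-- `A` contains an `F`-copy lying inside the set `X`. -/
def HasCopyIn {σ : Type*} (n d k : ℕ) (F : Set ((Fin d → ℕ) → σ))
    (A : (Fin d → ℕ) → σ) (X : Set (Fin d → ℕ)) : Prop :=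
  ∃ a, ValidLoc n d k a ∧ HasCopyAt d k F A a ∧ kbox d k a ⊆ X

/-- `A` satisfies the `k`-local property `P(F)`: it contains no `F`-copy. -/
def SatisfiesP {σ : Type*} (n d k : ℕ) (F : Set ((Fin d → ℕ) → σ))
    (A : (Fin d → ℕ) → σ) : Prop :=
  ¬ ∃ a, ValidLoc n d k a ∧ HasCopyAt d k F A a

/-- `A` is `ε`-far from `P(F)`: every array satisfying `P(F)` differs from `A`
in at least `ε·n^d` entries of `[n]^d`. -/
def FarFrom {σ : Type*} (n d k : ℕ) (F : Set ((Fin d → ℕ) → σ)) (ε : ℝ)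
    (A : (Fin d → ℕ) → σ) : Prop :=
  ∀ A' : (Fin d → ℕ) → σ, SatisfiesP n d k F A' →
    ε * (n : ℝ) ^ d ≤ ({x | x ∈ cube n d ∧ A x ≠ A' x}).ncard

/-- A block `B` is `(P,A)`-unrepairable: every array agreeing with `A` on `∂B`
(including `A` itself) contains an `F`-copy lying inside `B̄`. -/
def Unrepairable {σ : Type*} (n d k : ℕ) (F : Set ((Fin d → ℕ) → σ))
    (A : (Fin d → ℕ) → σ) (B : Set (Fin d → ℕ)) : Prop :=
  ∀ A' : (Fin d → ℕ) → σ, (∀ x ∈ blockBoundary n d k B, A' x = A x) →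
    HasCopyIn n d k F A' (blockClosure n d k B)

/-- `r = ⌊log₂(n/w)⌋`. -/
def sysR (n w : ℕ) : ℕ := Nat.log 2 (n / w)

/-- An `(n,d,k,w)`-system of grids `(G_0, …, G_r)` with `r = ⌊log₂(n/w)⌋`:
`G_i ∈ 𝒢(n,d,k,⌊n/2^(r−i)⌋)` and `G_0 ⊇ G_1 ⊇ ⋯ ⊇ G_r`. -/
structure GridSystem (n d k w : ℕ) where
  G : ℕ → Set (Fin d → ℕ)
  isGrid : ∀ i ≤ sysR n w, IsGrid n d k (n / 2 ^ (sysR n w - i)) (G i)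
  nested : ∀ i j : ℕ, j ≤ i → i ≤ sysR n w → G i ⊆ G j

/-- A `G_i`-block `B` is a `(P,A)`-witness: either `i = 0` and `A` contains an `F`-copy
inside `B̄`, or `i > 0` and `B` is `(P,A)`-unrepairable. -/
def IsWitness {σ : Type*} (n d k w : ℕ) (S : GridSystem n d k w)
    (F : Set ((Fin d → ℕ) → σ)) (A : (Fin d → ℕ) → σ)
    (i : ℕ) (B : Set (Fin d → ℕ)) : Prop :=
  i ≤ sysR n w ∧ IsBlock n d (S.G i) B ∧
    ((i = 0 ∧ HasCopyIn n d k F A (blockClosure n d k B)) ∨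
      (0 < i ∧ Unrepairable n d k F A B))

/-- A witness is maximal if all of its ancestors (blocks of coarser grids containing it)
are `(P,A)`-repairable. -/
def IsMaximalWitness {σ : Type*} (n d k w : ℕ) (S : GridSystem n d k w)
    (F : Set ((Fin d → ℕ) → σ)) (A : (Fin d → ℕ) → σ)
    (i : ℕ) (B : Set (Fin d → ℕ)) : Prop :=
  IsWitness n d k w S F A i B ∧
    ∀ j, i < j → j ≤ sysR n w → ∀ B', IsBlock n d (S.G j) B' → B ⊆ B' →
      ¬ Unrepairable n d k F A B'

/-- The family `W` of all maximal `(P,A)`-witness blocks. -/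
def MaxWitnessFamily {σ : Type*} (n d k w : ℕ) (S : GridSystem n d k w)
    (F : Set ((Fin d → ℕ) → σ)) (A : (Fin d → ℕ) → σ) :
    Set (Set (Fin d → ℕ)) :=
  {B | ∃ i, IsMaximalWitness n d k w S F A i B}

/-- `Par(B)` for a `G_i`-block `B`: the `G_{i+1}`-block containing `B` if `i < r`
(expressed as the union of all such blocks, of which there is exactly one), and
`[n]^d` for `i = r`. -/
def parentSet (n d k w : ℕ) (S : GridSystem n d k w) (i : ℕ)
    (B : Set (Fin d → ℕ)) : Set (Fin d → ℕ) :=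
  if i = sysR n w then cube n d
  else ⋃₀ {B' | IsBlock n d (S.G (i + 1)) B' ∧ B ⊆ B'}


/-!
If a maximal witness sits at the top level, its parent is all of `[n]^d` and any array
satisfying `P` will do. Otherwise every parent `Par(B)` of a maximal witness `B` is repairable;
give each entry covered by such parents the value of the repair of the highest-level parent
containing it. Take a width-`k` window and the highest level `ℓ₀` of a parent `P₀` meeting it.
Since the lines of the grid `G_{ℓ₀}` come in slabs of `k - 1` at distance at least `k`, the
entries of the window off `G_{ℓ₀}` are connected inside the window, so they all lie in `P₀`;
by nestedness this includes the entries of all parents meeting the window, and the others lie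
in `∂P₀`, where the repair of `P₀` agrees with `A`. Hence the new array equals the repair of
`P₀` on the window and has no forbidden copy there. A window meeting no parent carries `A`, and
a copy in it would make the `G_0`-block of a free entry a witness, whose maximal ancestor has a
parent meeting the window.
-/

open Relation

def FreeStep {d : ℕ} (X : Set (Fin d → ℕ)) (a b : Fin d → ℕ) : Prop :=
  a ∈ X ∧ b ∈ X ∧ Neighbor a b

section LatticePaths

variable {d : ℕ}

lemma Neighbor.symm {x y : Fin d → ℕ} (h : Neighbor x y) : Neighbor y x := by
  unfold Neighbor at *
  simpa only [Nat.dist_comm] using h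

lemma neighbor_update_succ (x : Fin d → ℕ) (i : Fin d) (m : ℕ) :
    Neighbor (Function.update x i m) (Function.update x i (m + 1)) := by
  unfold Neighbor
  rw [Finset.sum_eq_single i (fun j _ hj => by simp [Function.update_of_ne hj, Nat.dist_self])
    (by simp)]
  simp [Nat.dist]

instance (X : Set (Fin d → ℕ)) : Std.Symm (FreeStep X) :=
  ⟨fun _ _ ⟨ha, hb, h⟩ => ⟨hb, ha, h.symm⟩⟩

lemma reflTransGen_freeStep_update_of_le {X : Set (Fin d → ℕ)} (x : Fin d → ℕ) (i : Fin d)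
    {u v : ℕ} (huv : u ≤ v) (hX : ∀ m ∈ Set.Icc u v, Function.update x i m ∈ X) :
    ReflTransGen (FreeStep X) (Function.update x i u) (Function.update x i v) := by
  induction v, huv using Nat.le_induction with
  | base => exact .refl
  | succ v huv ih =>
    exact (ih fun m hm => hX m ⟨hm.1, hm.2.trans v.le_succ⟩).tail
      ⟨hX v ⟨huv, v.le_succ⟩, hX (v + 1) ⟨by omega, le_rfl⟩, neighbor_update_succ x i v⟩

/-- Change the coordinates one at a time, each monotonically. -/
lemma reflTransGen_freeStep_of_mem_pi {T : Fin d → Set ℕ} (hT : ∀ i, (T i).OrdConnected)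
    {X : Set (Fin d → ℕ)} (hTX : Set.univ.pi T ⊆ X) {x y : Fin d → ℕ}
    (hx : x ∈ Set.univ.pi T) (hy : y ∈ Set.univ.pi T) :
    ReflTransGen (FreeStep X) x y := by
  classical
  suffices ∀ s : Finset (Fin d), ReflTransGen (FreeStep X) x (s.piecewise y x) by
    simpa using this Finset.univ
  intro s
  induction s using Finset.induction_on with
  | empty => simpa using ReflTransGen.refl
  | insert i s _ ih =>
    refine ih.trans ?_
    set z := s.piecewise y x
    have hz : z ∈ Set.univ.pi T := s.piecewise_mem_set_pi hy hx
    have hseg : ∀ m ∈ Set.uIcc (z i) (y i), Function.update z i m ∈ X := fun m hm =>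
      hTX ((Set.update_mem_pi_iff_of_mem hz).2 fun _ =>
        (hT i).uIcc_subset (Set.mem_univ_pi.1 hz i) (Set.mem_univ_pi.1 hy i) hm)
    rw [Finset.piecewise_insert]
    rcases le_total (z i) (y i) with hle | hle
    · simpa using reflTransGen_freeStep_update_of_le z i hle
        fun m hm => hseg m (Set.Icc_subset_uIcc hm)
    · refine Std.Symm.symm _ _ ?_
      simpa using reflTransGen_freeStep_update_of_le z i hle
        fun m hm => hseg m (Set.Icc_subset_uIcc' hm)

end LatticePaths

lemma mem_takeSmallest_Icc {a b ℓ v : ℕ} :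
    v ∈ takeSmallest (Finset.Icc a b) ℓ ↔ a ≤ v ∧ v ≤ b ∧ v + 1 ≤ a + ℓ := by
  have hle : (Finset.Icc a b).filter (· ≤ v) = Finset.Icc a (min b v) := by
    ext z
    simp only [Finset.mem_filter, Finset.mem_Icc]
    omega
  simp only [takeSmallest, Finset.mem_filter, Finset.mem_Icc, hle, Nat.card_Icc]
  omega

namespace IntervalPartition

variable {n w : ℕ} (Q : IntervalPartition n w)

/-- The hyperplanes `x_i = v` avoid the grid induced by `Q`. -/
def OffGrid (k v : ℕ) : Prop :=
  ∀ j, v ∉ takeSmallest (Q.I j) (k - 1)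

lemma exists_Icc {k : ℕ} (hkw : k ≤ w) (j : Fin Q.t) :
    ∃ a b, 1 ≤ a ∧ a + k ≤ b + 1 ∧ b ≤ n ∧ Q.I j = Finset.Icc a b := by
  obtain ⟨a, b, ha, hab, hbn, hI⟩ := Q.interval j
  have hcard := Q.size j
  rw [hI, Nat.card_Icc] at hcard
  exact ⟨a, b, ha, by omega, hbn, hI⟩

variable {Q} {k : ℕ}

lemma OffGrid.of_le_of_le (hkw : k ≤ w) {u v z : ℕ} (hu : Q.OffGrid k u) (hz : Q.OffGrid k z)
    (huv : u ≤ v) (hvz : v ≤ z) (hzu : z ≤ u + (k - 1)) : Q.OffGrid k v := by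
  intro j hv
  obtain ⟨a, b, -, hab, -, hI⟩ := Q.exists_Icc hkw j
  have hu := hu j
  have hz := hz j
  rw [hI, mem_takeSmallest_Icc] at hu hz hv
  omega

lemma ordConnected_Icc_inter_offGrid (hkw : k ≤ w) (c : ℕ) :
    (Set.Icc c (c + k - 1) ∩ {v | Q.OffGrid k v}).OrdConnected :=
  Set.ordConnected_iff.2 fun u hu z hz _ v hv =>
    ⟨⟨hu.1.1.trans hv.1, hv.2.trans hz.1.2⟩,
      hu.2.of_le_of_le hkw hz.2 hv.1 hv.2 (by have := hu.1.1; have := hz.1.2; omega)⟩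

/-- If the top of the window is in some `I_j[:k-1]`, the point just below `I_j` ends the previous
interval, which is longer than `k - 1`. -/
lemma exists_offGrid_mem_Icc (hk : 0 < k) (hkw : k ≤ w) {c : ℕ} (hc : 1 ≤ c) :
    ∃ v ∈ Set.Icc c (c + k - 1), Q.OffGrid k v := by
  by_cases htop : Q.OffGrid k (c + k - 1)
  · exact ⟨c + k - 1, ⟨by omega, le_rfl⟩, htop⟩
  simp only [OffGrid, not_forall, not_not] at htop
  obtain ⟨j, hj⟩ := htop
  obtain ⟨a, b, -, hab, -, hI⟩ := Q.exists_Icc hkw j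
  rw [hI, mem_takeSmallest_Icc] at hj
  refine ⟨a - 1, ⟨by omega, by omega⟩, fun j' hj' => ?_⟩
  have hj'I : a - 1 ∈ Q.I j' := Finset.filter_subset _ _ hj'
  obtain ⟨a', b', -, hab', -, hI'⟩ := Q.exists_Icc hkw j'
  have haj : a ∈ Q.I j := by rw [hI, Finset.mem_Icc]; omega
  rw [hI', mem_takeSmallest_Icc] at hj'
  rcases lt_trichotomy j' j with hlt | rfl | hlt
  · have := Q.ordered j' j hlt b' (by rw [hI', Finset.mem_Icc]; omega) a haj
    omega
  · rw [hI, Finset.mem_Icc] at hj'I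
    omega
  · have := Q.ordered j j' hlt a haj (a - 1) hj'I
    omega

end IntervalPartition

section Grids

variable {n d k w : ℕ}

lemma mem_cube_diff_gridOf_iff {Q : IntervalPartition n w} {x : Fin d → ℕ} :
    x ∈ cube n d \ gridOf n d k w Q ↔ ∀ i, x i ∈ Set.Icc 1 n ∧ Q.OffGrid k (x i) := by
  simp only [cube, gridOf, IntervalPartition.OffGrid, Set.mem_sdiff, Set.mem_ofPred_eq,
    Set.mem_Icc, not_and, not_exists]
  exact ⟨fun ⟨hc, hg⟩ i => ⟨hc i, fun j hj => hg hc i j hj⟩,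
    fun h => ⟨fun i => (h i).1, fun _ i j hj => (h i).2 j hj⟩⟩

def KBoxConnected (d k : ℕ) (X : Set (Fin d → ℕ)) : Prop :=
  ∀ a, ∀ x ∈ kbox d k a ∩ X, ∀ y ∈ kbox d k a ∩ X, ReflTransGen (FreeStep X) x y

lemma IsGrid.kBoxConnected {G : Set (Fin d → ℕ)} (hG : IsGrid n d k w G) (hkw : k ≤ w) :
    KBoxConnected d k (cube n d \ G) := by
  obtain ⟨Q, rfl⟩ := hG
  intro a x hx y hy
  have hpi : ∀ z ∈ kbox d k a ∩ (cube n d \ gridOf n d k w Q), z ∈ Set.univ.pi fun i =>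
      Set.Icc 1 n ∩ (Set.Icc (a i) (a i + k - 1) ∩ {v | Q.OffGrid k v}) := fun z hz =>
    Set.mem_univ_pi.2 fun i =>
      ⟨(mem_cube_diff_gridOf_iff.1 hz.2 i).1, hz.1 i, (mem_cube_diff_gridOf_iff.1 hz.2 i).2⟩
  refine reflTransGen_freeStep_of_mem_pi (fun i =>
    Set.ordConnected_Icc.inter (IntervalPartition.ordConnected_Icc_inter_offGrid hkw _))
    (fun z hz => ?_) (hpi x hx) (hpi y hy)
  exact mem_cube_diff_gridOf_iff.2 fun i =>
    ⟨(Set.mem_univ_pi.1 hz i).1, (Set.mem_univ_pi.1 hz i).2.2⟩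

lemma IsGrid.exists_mem_kbox_diff {G : Set (Fin d → ℕ)} (hG : IsGrid n d k w G) (hk : 0 < k)
    (hkw : k ≤ w) (hkn : k ≤ n) {a : Fin d → ℕ} (ha : ValidLoc n d k a) :
    ∃ t ∈ kbox d k a, t ∈ cube n d \ G := by
  obtain ⟨Q, rfl⟩ := hG
  have hv : ∀ i, ∃ v ∈ Set.Icc (a i) (a i + k - 1), Q.OffGrid k v := fun i =>
    IntervalPartition.exists_offGrid_mem_Icc hk hkw (ha i).1
  choose t ht hoff using hv
  refine ⟨t, fun i => ht i, mem_cube_diff_gridOf_iff.2 fun i => ⟨?_, hoff i⟩⟩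
  obtain ⟨hat, hta⟩ := ht i
  have := ha i
  exact ⟨by omega, by omega⟩

end Grids

section Blocks

variable {n d : ℕ} {G B : Set (Fin d → ℕ)}

lemma IsBlock.mem_of_reflTransGen (hB : IsBlock n d G B) {x y : Fin d → ℕ} (hx : x ∈ B)
    (hxy : ReflTransGen (FreeStep (cube n d \ G)) x y) : y ∈ B := by
  induction hxy with
  | refl => exact hx
  | tail _ hstep ih => exact hB.2.2.2 _ ih _ hstep.2.1 hstep.2.2

/-- The `G`-block containing `t` when `t ∈ cube n d \ G`, and `∅` otherwise. -/
def blockOf (n d : ℕ) (G : Set (Fin d → ℕ)) (t : Fin d → ℕ) : Set (Fin d → ℕ) :=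
  {y | y ∈ cube n d \ G ∧ ReflTransGen (FreeStep (cube n d \ G)) t y}

lemma mem_blockOf_self {t : Fin d → ℕ} (ht : t ∈ cube n d \ G) : t ∈ blockOf n d G t :=
  ⟨ht, .refl⟩

lemma isBlock_blockOf {t : Fin d → ℕ} (ht : t ∈ cube n d \ G) :
    IsBlock n d G (blockOf n d G t) :=
  ⟨⟨t, mem_blockOf_self ht⟩, fun _ hy => hy.1,
    fun _ hx _ hy => (Std.Symm.symm _ _ hx.2).trans hy.2,
    fun _ hx _ hy hxy => ⟨hy, hx.2.tail ⟨hx.1, hy, hxy⟩⟩⟩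

lemma IsBlock.eq_blockOf (hB : IsBlock n d G B) {t : Fin d → ℕ} (ht : t ∈ B) :
    B = blockOf n d G t :=
  Set.ext fun _ => ⟨fun hy => ⟨hB.2.1 hy, hB.2.2.1 t ht _ hy⟩,
    fun hy => hB.mem_of_reflTransGen ht hy.2⟩

lemma IsBlock.subset_blockOf {G' : Set (Fin d → ℕ)} (hB : IsBlock n d G B) (hG' : G' ⊆ G)
    {t : Fin d → ℕ} (ht : t ∈ B) : B ⊆ blockOf n d G' t := by
  have hfree : cube n d \ G ⊆ cube n d \ G' := Set.sdiff_subset_sdiff_right hG'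
  exact fun y hy => ⟨hfree (hB.2.1 hy),
    ReflTransGen.mono (fun _ _ h => ⟨hfree h.1, hfree h.2.1, h.2.2⟩) _ _ (hB.2.2.1 t ht y hy)⟩

end Blocks

section Copies

variable {σ : Type*} {n d k : ℕ} {F : Set ((Fin d → ℕ) → σ)} {a : Fin d → ℕ}

lemma kbox_subset_cube (hkn : k ≤ n) (ha : ValidLoc n d k a) : kbox d k a ⊆ cube n d :=
  fun x hx i => by
    have := hx i
    have := ha i
    omega

lemma kbox_subset_blockClosure (hkn : k ≤ n) (ha : ValidLoc n d k a) {B : Set (Fin d → ℕ)}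
    {p : Fin d → ℕ} (hp : p ∈ kbox d k a) (hpB : p ∈ B) :
    kbox d k a ⊆ blockClosure n d k B := fun x hx =>
  ⟨kbox_subset_cube hkn ha hx, p, hpB, fun i => by
    have := hx i
    have := hp i
    have := ha i
    simp only [Nat.dist]
    omega⟩

lemma HasCopyAt.congr {A₁ A₂ : (Fin d → ℕ) → σ} (h : ∀ x ∈ kbox d k a, A₁ x = A₂ x)
    (hc : HasCopyAt d k F A₁ a) : HasCopyAt d k F A₂ a := by
  obtain ⟨S, hS, hcopy⟩ := hc
  refine ⟨S, hS, fun j hj => ?_⟩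
  rw [← h _ fun i => by have := hj i; omega]
  exact hcopy j hj

lemma exists_satisfiesP_eq_of_notMem_cube (hkn : k ≤ n)
    (hP : ∃ A₀ : (Fin d → ℕ) → σ, SatisfiesP n d k F A₀) (A : (Fin d → ℕ) → σ) :
    ∃ A' : (Fin d → ℕ) → σ, SatisfiesP n d k F A' ∧ ∀ x ∉ cube n d, A' x = A x := by
  classical
  obtain ⟨A₀, hA₀⟩ := hP
  exact ⟨(cube n d).piecewise A₀ A,
    fun ⟨a, ha, hc⟩ => hA₀ ⟨a, ha, hc.congr fun x hx =>
      Set.piecewise_eq_of_mem _ _ _ (kbox_subset_cube hkn ha hx)⟩,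
    fun x hx => Set.piecewise_eq_of_notMem _ _ _ hx⟩

end Copies

section Patching

variable {σ : Type*} {n d k r : ℕ} {G : ℕ → Set (Fin d → ℕ)} {F : Set ((Fin d → ℕ) → σ)}
  {A : (Fin d → ℕ) → σ} {Patch : ℕ → Set (Fin d → ℕ) → Prop}

open Classical in
noncomputable def topPatchLevel (Patch : ℕ → Set (Fin d → ℕ) → Prop) (r : ℕ) (x : Fin d → ℕ) : ℕ :=
  Nat.findGreatest (fun ℓ => ∃ P, Patch ℓ P ∧ x ∈ P) r

open Classical in
/-- `Patch ℓ P` marks the `G ℓ`-blocks `P` to be repaired and `R ℓ P` is a repair of `P`; an entry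
covered by patches takes its value from the repair of the highest-level patch containing it. -/
noncomputable def patchedArray (n : ℕ) (G : ℕ → Set (Fin d → ℕ))
    (Patch : ℕ → Set (Fin d → ℕ) → Prop) (r : ℕ)
    (R : ℕ → Set (Fin d → ℕ) → (Fin d → ℕ) → σ) (A : (Fin d → ℕ) → σ) : (Fin d → ℕ) → σ :=
  fun x => if ∃ ℓ P, Patch ℓ P ∧ x ∈ P then
    R (topPatchLevel Patch r x) (blockOf n d (G (topPatchLevel Patch r x)) x) x else A x

/-- The free entries of the window at level `ℓ₀` are connected, hence all lie in `P₀`. -/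
lemma patchedArray_eq_of_mem_kbox {R : ℕ → Set (Fin d → ℕ) → (Fin d → ℕ) → σ}
    (hPatch : ∀ ℓ P, Patch ℓ P → ℓ ≤ r ∧ IsBlock n d (G ℓ) P)
    (hconn : ∀ ℓ ≤ r, KBoxConnected d k (cube n d \ G ℓ))
    (hG : ∀ i j, j ≤ i → i ≤ r → G i ⊆ G j)
    (hR : ∀ ℓ P, Patch ℓ P → ∀ x ∈ blockBoundary n d k P, R ℓ P x = A x)
    (hkn : k ≤ n) {a : Fin d → ℕ} (ha : ValidLoc n d k a) {ℓ₀ : ℕ} {P₀ : Set (Fin d → ℕ)}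
    {p : Fin d → ℕ} (hP₀ : Patch ℓ₀ P₀) (hp : p ∈ kbox d k a) (hpP₀ : p ∈ P₀)
    (hmax : ∀ ℓ P, Patch ℓ P → (∃ x ∈ kbox d k a, x ∈ P) → ℓ ≤ ℓ₀) :
    ∀ x ∈ kbox d k a, patchedArray n G Patch r R A x = R ℓ₀ P₀ x := by
  classical
  intro x hx
  obtain ⟨hℓ₀r, hB₀⟩ := hPatch _ _ hP₀
  unfold patchedArray
  split_ifs with hcov
  · obtain ⟨ℓ₁, P₁, hP₁, hxP₁⟩ := hcov
    obtain ⟨P, hP, hxP⟩ : ∃ P, Patch (topPatchLevel Patch r x) P ∧ x ∈ P :=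
      Nat.findGreatest_spec (P := fun ℓ => ∃ P, Patch ℓ P ∧ x ∈ P) (hPatch _ _ hP₁).1
        ⟨P₁, hP₁, hxP₁⟩
    have hle : topPatchLevel Patch r x ≤ ℓ₀ := hmax _ _ hP ⟨x, hx, hxP⟩
    have hxfree : x ∈ cube n d \ G ℓ₀ :=
      Set.sdiff_subset_sdiff_right (hG _ _ hle hℓ₀r) ((hPatch _ _ hP).2.2.1 hxP)
    have hxP₀ : x ∈ P₀ := hB₀.mem_of_reflTransGen hpP₀
      (hconn ℓ₀ hℓ₀r a p ⟨hp, hB₀.2.1 hpP₀⟩ x ⟨hx, hxfree⟩)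
    have hℓ : topPatchLevel Patch r x = ℓ₀ :=
      le_antisymm hle (Nat.le_findGreatest hℓ₀r ⟨P₀, hP₀, hxP₀⟩)
    rw [hℓ, ← hB₀.eq_blockOf hxP₀]
  · exact (hR _ _ hP₀ x ⟨kbox_subset_blockClosure hkn ha hp hpP₀ hx,
      fun hxP₀ => hcov ⟨ℓ₀, P₀, hP₀, hxP₀⟩⟩).symm

theorem exists_repair_off_patches (hkn : k ≤ n)
    (hPatch : ∀ ℓ P, Patch ℓ P → ℓ ≤ r ∧ IsBlock n d (G ℓ) P ∧ ¬ Unrepairable n d k F A P)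
    (hconn : ∀ ℓ ≤ r, KBoxConnected d k (cube n d \ G ℓ))
    (hG : ∀ i j, j ≤ i → i ≤ r → G i ⊆ G j) :
    ∃ A' : (Fin d → ℕ) → σ, (∀ x, (∀ ℓ P, Patch ℓ P → x ∉ P) → A' x = A x) ∧
      ∀ a, ValidLoc n d k a → HasCopyAt d k F A' a →
        HasCopyAt d k F A a ∧ ∀ ℓ P, Patch ℓ P → ∀ x ∈ kbox d k a, x ∉ P := by
  classical
  have hrep : ∀ ℓ P, ∃ R : (Fin d → ℕ) → σ, Patch ℓ P →
      (∀ x ∈ blockBoundary n d k P, R x = A x) ∧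
        ¬ HasCopyIn n d k F R (blockClosure n d k P) := by
    intro ℓ P
    by_cases hP : Patch ℓ P
    · obtain ⟨R, hR, hno⟩ := not_forall₂.1 (hPatch ℓ P hP).2.2
      exact ⟨R, fun _ => ⟨hR, hno⟩⟩
    · exact ⟨A, fun h => absurd h hP⟩
  choose R hR using hrep
  have hoff : ∀ x, (∀ ℓ P, Patch ℓ P → x ∉ P) → patchedArray n G Patch r R A x = A x :=
    fun x hx => if_neg fun ⟨ℓ, P, hP, hxP⟩ => hx ℓ P hP hxP
  refine ⟨patchedArray n G Patch r R A, hoff, fun a ha hc => ?_⟩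
  have hmiss : ∀ ℓ P, Patch ℓ P → ∀ x ∈ kbox d k a, x ∉ P := by
    intro ℓ P hP x hx hxP
    let ℓ₀ := Nat.findGreatest (fun ℓ => ∃ P, Patch ℓ P ∧ ∃ x ∈ kbox d k a, x ∈ P) r
    obtain ⟨P₀, hP₀, p, hp, hpP₀⟩ : ∃ P₀, Patch ℓ₀ P₀ ∧ ∃ p ∈ kbox d k a, p ∈ P₀ :=
      Nat.findGreatest_spec (P := fun ℓ => ∃ P, Patch ℓ P ∧ ∃ x ∈ kbox d k a, x ∈ P)
        (hPatch ℓ P hP).1 ⟨P, hP, x, hx, hxP⟩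
    have heq := patchedArray_eq_of_mem_kbox
      (fun ℓ P hP => ⟨(hPatch ℓ P hP).1, (hPatch ℓ P hP).2.1⟩) hconn hG
      (fun ℓ P hP => (hR ℓ P hP).1) hkn ha hP₀ hp hpP₀
      fun ℓ' P' hP' hm => Nat.le_findGreatest (hPatch _ _ hP').1 ⟨P', hP', hm⟩
    exact (hR _ _ hP₀).2 ⟨a, ha, hc.congr heq, kbox_subset_blockClosure hkn ha hp hpP₀⟩
  exact ⟨hc.congr fun x hx => hoff x fun ℓ P hP => hmiss ℓ P hP x hx, hmiss⟩

end Patching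

lemma le_div_two_pow_sysR_sub {n w : ℕ} (hwn : w ≤ n) (ℓ : ℕ) :
    w ≤ n / 2 ^ (sysR n w - ℓ) := by
  rcases Nat.eq_zero_or_pos w with rfl | hw
  · exact Nat.zero_le _
  rw [Nat.le_div_iff_mul_le (Nat.two_pow_pos _)]
  calc w * 2 ^ (sysR n w - ℓ) ≤ w * (n / w) :=
        Nat.mul_le_mul_left w ((Nat.pow_le_pow_right two_pos (Nat.sub_le _ _)).trans
          (Nat.pow_log_le_self 2 (Nat.div_pos hwn hw).ne'))
    _ ≤ n := Nat.mul_div_le n w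

section Witnesses

variable {σ : Type*} {n d k w : ℕ} {S : GridSystem n d k w} {F : Set ((Fin d → ℕ) → σ)}
  {A : (Fin d → ℕ) → σ}

/-- The highest unrepairable ancestor of a witness, if any, is a maximal witness. -/
lemma IsWitness.exists_isMaximalWitness_superset {i : ℕ} {B : Set (Fin d → ℕ)}
    (hw : IsWitness n d k w S F A i B) :
    ∃ i' B', IsMaximalWitness n d k w S F A i' B' ∧ B ⊆ B' := by
  classical
  by_cases hmax : ∀ j, i < j → j ≤ sysR n w → ∀ B', IsBlock n d (S.G j) B' → B ⊆ B' →
      ¬ Unrepairable n d k F A B'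
  · exact ⟨i, B, ⟨hw, hmax⟩, subset_rfl⟩
  push Not at hmax
  obtain ⟨j, hij, hjr, B', hB', hBB', hun⟩ := hmax
  let UnrepairableAt := fun j =>
    ∃ B', IsBlock n d (S.G j) B' ∧ B ⊆ B' ∧ Unrepairable n d k F A B'
  let J := Nat.findGreatest UnrepairableAt (sysR n w)
  have hjJ : j ≤ J := Nat.le_findGreatest hjr ⟨B', hB', hBB', hun⟩
  obtain ⟨B'', hB'', hBB'', hun''⟩ : UnrepairableAt J :=
    Nat.findGreatest_spec hjr ⟨B', hB', hBB', hun⟩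
  refine ⟨J, B'', ⟨⟨Nat.findGreatest_le _, hB'', Or.inr ⟨by omega, hun''⟩⟩,
    fun j' hJj' hj'r C hC hB''C hunC => ?_⟩, hBB''⟩
  have : j' ≤ J := Nat.le_findGreatest hj'r ⟨C, hC, hBB''.trans hB''C, hunC⟩
  omega

variable (S F A) in
def IsMaxWitnessParent (ℓ : ℕ) (P : Set (Fin d → ℕ)) : Prop :=
  ∃ i B, IsMaximalWitness n d k w S F A i B ∧ i < sysR n w ∧ ℓ = i + 1 ∧
    IsBlock n d (S.G ℓ) P ∧ B ⊆ P

namespace IsMaxWitnessParent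

variable {ℓ : ℕ} {P : Set (Fin d → ℕ)}

lemma le_sysR (h : IsMaxWitnessParent S F A ℓ P) : ℓ ≤ sysR n w := by
  obtain ⟨i, B, -, hir, rfl, -⟩ := h
  exact hir

lemma isBlock (h : IsMaxWitnessParent S F A ℓ P) : IsBlock n d (S.G ℓ) P := by
  obtain ⟨i, B, -, -, -, hP, -⟩ := h
  exact hP

lemma not_unrepairable (h : IsMaxWitnessParent S F A ℓ P) : ¬ Unrepairable n d k F A P := by
  obtain ⟨i, B, hB, hir, rfl, hP, hBP⟩ := h
  exact hB.2 (i + 1) i.lt_succ_self hir P hP hBP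

lemma mem_parentSet (h : IsMaxWitnessParent S F A ℓ P) {x : Fin d → ℕ} (hx : x ∈ P) :
    ∃ i B, IsMaximalWitness n d k w S F A i B ∧ x ∈ parentSet n d k w S i B := by
  obtain ⟨i, B, hB, hir, rfl, hP, hBP⟩ := h
  refine ⟨i, B, hB, ?_⟩
  rw [parentSet, if_neg hir.ne]
  exact ⟨P, ⟨hP, hBP⟩, hx⟩

end IsMaxWitnessParent

lemma exists_isMaxWitnessParent_of_hasCopyAt
    (htop : ¬ ∃ B, IsMaximalWitness n d k w S F A (sysR n w) B) (hk : 0 < k) (hkw : k ≤ w)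
    (hwn : w ≤ n) {a : Fin d → ℕ} (ha : ValidLoc n d k a) (hc : HasCopyAt d k F A a) :
    ∃ ℓ P, IsMaxWitnessParent S F A ℓ P ∧ ∃ x ∈ kbox d k a, x ∈ P := by
  have hkn := hkw.trans hwn
  obtain ⟨t, htk, ht⟩ := (S.isGrid 0 (Nat.zero_le _)).exists_mem_kbox_diff hk
    (hkw.trans (le_div_two_pow_sysR_sub hwn 0)) hkn ha
  have hw : IsWitness n d k w S F A 0 (blockOf n d (S.G 0) t) :=
    ⟨Nat.zero_le _, isBlock_blockOf ht,
      Or.inl ⟨rfl, a, ha, hc, kbox_subset_blockClosure hkn ha htk (mem_blockOf_self ht)⟩⟩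
  obtain ⟨i, B, hB, hsub⟩ := hw.exists_isMaximalWitness_superset
  have hir : i < sysR n w := hB.1.1.lt_of_ne fun h => htop ⟨B, h ▸ hB⟩
  have htB : t ∈ B := hsub (mem_blockOf_self ht)
  have hGi : S.G (i + 1) ⊆ S.G i := S.nested _ _ i.le_succ hir
  have ht' : t ∈ cube n d \ S.G (i + 1) :=
    Set.sdiff_subset_sdiff_right hGi (hB.1.2.1.2.1 htB)
  exact ⟨i + 1, blockOf n d (S.G (i + 1)) t,
    ⟨i, B, hB, hir, rfl, isBlock_blockOf ht', hB.1.2.1.subset_blockOf hGi htB⟩,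
    t, htk, mem_blockOf_self ht'⟩

end Witnesses

theorem repair_inside_parents_of_maximal_witnesses_general (n d k w : ℕ)
    (hk : 2 ≤ k) (hkw : k ≤ w) (hwn : w ≤ n) {σ : Type*}
    (F : Set ((Fin d → ℕ) → σ))
    (hP : ∃ A₀ : (Fin d → ℕ) → σ, SatisfiesP n d k F A₀)
    (A : (Fin d → ℕ) → σ) (S : GridSystem n d k w) :
    ∃ A' : (Fin d → ℕ) → σ, SatisfiesP n d k F A' ∧
      ∀ x : Fin d → ℕ,
        x ∉ {y | ∃ (i : ℕ) (B : Set (Fin d → ℕ)),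
          IsMaximalWitness n d k w S F A i B ∧ y ∈ parentSet n d k w S i B} →
        A' x = A x := by
  have hkn : k ≤ n := hkw.trans hwn
  by_cases htop : ∃ B, IsMaximalWitness n d k w S F A (sysR n w) B
  · obtain ⟨B, hB⟩ := htop
    obtain ⟨A', hA', hoff⟩ := exists_satisfiesP_eq_of_notMem_cube hkn hP A
    refine ⟨A', hA', fun x hx => hoff x fun hxc => hx ⟨_, B, hB, ?_⟩⟩
    rwa [parentSet, if_pos rfl]
  · obtain ⟨A', hoff, hcopy⟩ := exists_repair_off_patches (Patch := IsMaxWitnessParent S F A) hkn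
      (fun _ _ h => ⟨h.le_sysR, h.isBlock, h.not_unrepairable⟩)
      (fun ℓ hℓ => (S.isGrid ℓ hℓ).kBoxConnected (hkw.trans (le_div_two_pow_sysR_sub hwn ℓ)))
      S.nested
    refine ⟨A', fun ⟨a, ha, hc⟩ => ?_, fun x hx =>
      hoff x fun ℓ P hP hxP => hx (hP.mem_parentSet hxP)⟩
    obtain ⟨hcA, hmiss⟩ := hcopy a ha hc
    obtain ⟨ℓ, P, hP, x, hx, hxP⟩ :=
      exists_isMaxWitnessParent_of_hasCopyAt htop (by omega) hkw hwn ha hcA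
    exact hmiss ℓ P hP x hx hxP

/-- For a nonempty `k`-local property `P(F)`, one can make `A`
satisfy `P(F)` by modifying entries only inside `⋃_{B ∈ W} Par(B)`, where `W` is the
family of all maximal `(P,A)`-witness blocks. -/
theorem repair_inside_parents_of_maximal_witnesses (n d k w : ℕ) (hd : 1 ≤ d)
    (hk : 2 ≤ k) (hkw : k ≤ w) (hwn : w ≤ n) {σ : Type*}
    (F : Set ((Fin d → ℕ) → σ))
    (hP : ∃ A₀ : (Fin d → ℕ) → σ, SatisfiesP n d k F A₀)
    (A : (Fin d → ℕ) → σ) (S : GridSystem n d k w) :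
    ∃ A' : (Fin d → ℕ) → σ, SatisfiesP n d k F A' ∧
      ∀ x : Fin d → ℕ,
        x ∉ {y | ∃ (i : ℕ) (B : Set (Fin d → ℕ)),
          IsMaximalWitness n d k w S F A i B ∧ y ∈ parentSet n d k w S i B} →
        A' x = A x :=
  repair_inside_parents_of_maximal_witnesses_general n d k w hk hkw hwn F hP A S
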